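/- arXiv:0906.4254 — 2 statements merged into one kernel-verified Lean document; each statement's English description precedes it below -/
import Mathlib

section
/- For Model 1 in dimension d = 1 under the Cramér condition: there exist c > 0, l₀ and r₀ < ∞ such that for all l ≥ l₀ and all r > r₀, P(Y_l ≤ −rl) ≤ l e^{−crl}, where Y_l = min_{x ∈ Ξ_0([0,l])} max_{γ ∈ ℵ_l^x([0,l])} V(γ). -/
/-!
Model 1 (directed last passage percolation, d = 1).  Edges are indexed by
`(x, m, b) : ℤ × ℕ × Bool`, representing the directed edge from the vertex
`(x, m)` to `(x + (if b then 1 else -1), m + 1)`.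
-/

open MeasureTheory ProbabilityTheory Filter

namespace Stmt7

/-- Position of a directed path after `k` steps, starting at `x`,
with step signs `s`. -/
def pos (x : ℤ) (s : ℕ → Bool) : ℕ → ℤ
  | 0 => x
  | k + 1 => pos x s k + (if s k then 1 else -1)

/-- Value `V(γ)` of the directed path starting at `(x, m)`, taking `n` steps
according to `s`, in the edge-weight realization `Y`. -/
noncomputable def pathVal (Y : ℤ × ℕ × Bool → ℝ) (x : ℤ) (m : ℕ) (s : ℕ → Bool) (n : ℕ) : ℝ :=
  ∑ k ∈ Finset.range n, Y (pos x s k, m + k, s k)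

/-- `Y_l = min_{x ∈ Ξ_0([0,l])} max_{γ ∈ ℵ_l^x([0,l])} V(γ)`:
the minimum over starting points `x ∈ Ξ_0([0,l])` (i.e. `0 ≤ x ≤ l`, `x` even)
of the maximal value of a directed path from `(x,0)` to level `l` whose
spatial coordinate stays in `[0,l]`. -/
noncomputable def Yl (Y : ℤ × ℕ × Bool → ℝ) (l : ℕ) : ℝ :=
  ⨅ x : {x : ℤ // 0 ≤ x ∧ x ≤ l ∧ x % 2 = 0},
    ⨆ s : {s : ℕ → Bool // ∀ k ≤ l, 0 ≤ pos x.1 s k ∧ pos x.1 s k ≤ l},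
      pathVal Y x.1 0 s.1 l

end Stmt7

open Stmt7

/-!
Fix an even starting point `x ∈ [0, l]` and let the path zig-zag between `x` and its neighbour
inside `[0, l]`. This path stays in the box, so `Y_l ≤ -r l` forces one of these at most `l`
zig-zag paths to have value `≤ -r l`. Each is a sum of `l` distinct, hence i.i.d., edge weights,
and the Chernoff bound at `t = -c₀/2` gives `P(V ≤ -r l) ≤ e^{-c₀ r l / 2} K^l` with
`K = E[e^{t X_e}]`. Once `log K ≤ c₀ r / 4` this is at most `e^{-c₀ r l / 4}`, and a union bound
over the starting points finishes the proof.
-/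

namespace Stmt7

open Finset

def zigzag (up : Bool) (j : ℕ) : Bool := if j % 2 = 0 then up else !up

lemma pos_zigzag (x : ℤ) (up : Bool) (k : ℕ) :
    pos x (zigzag up) k = x + if k % 2 = 0 then 0 else if up then 1 else -1 := by
  induction k with
  | zero => simp [pos]
  | succ k ih =>
    rw [pos, ih, zigzag]
    rcases Nat.mod_two_eq_zero_or_one k with hk | hk <;>
      cases up <;> simp [hk, Nat.succ_mod_two_eq_zero_iff]

lemma pos_zigzag_mem_Icc {l : ℕ} (hl : 1 ≤ l) {x : ℤ} (hx0 : 0 ≤ x) (hxl : x ≤ l) (k : ℕ) :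
    0 ≤ pos x (zigzag (decide (x < l))) k ∧ pos x (zigzag (decide (x < l))) k ≤ l := by
  rw [pos_zigzag]
  rcases lt_or_ge x l with hx | hx <;> split_ifs <;> simp_all <;> omega

def pathEdges (x : ℤ) (s : ℕ → Bool) (n : ℕ) : Finset (ℤ × ℕ × Bool) :=
  (range n).image fun k => (pos x s k, k, s k)

lemma pathEdge_injective (x : ℤ) (s : ℕ → Bool) :
    Function.Injective fun k => (pos x s k, k, s k) :=
  fun _ _ h => (Prod.ext_iff.1 (Prod.ext_iff.1 h).2).1

lemma card_pathEdges (x : ℤ) (s : ℕ → Bool) (n : ℕ) : #(pathEdges x s n) = n := by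
  rw [pathEdges, card_image_of_injective _ (pathEdge_injective x s), card_range]

lemma pathVal_eq_sum_pathEdges (Y : ℤ × ℕ × Bool → ℝ) (x : ℤ) (s : ℕ → Bool) (n : ℕ) :
    pathVal Y x 0 s n = ∑ e ∈ pathEdges x s n, Y e := by
  rw [pathEdges, sum_image fun a _ b _ h => pathEdge_injective x s h]
  simp [pathVal]

noncomputable def box (l : ℕ) : Finset (ℤ × ℕ × Bool) := Icc (0 : ℤ) l ×ˢ range l ×ˢ univ

lemma pathEdges_subset_box {x : ℤ} {s : ℕ → Bool} {l : ℕ}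
    (hs : ∀ k ≤ l, 0 ≤ pos x s k ∧ pos x s k ≤ l) : pathEdges x s l ⊆ box l := by
  intro e he
  obtain ⟨k, hk, rfl⟩ := mem_image.1 he
  have hkl := mem_range.1 hk
  simp [box, hs k hkl.le, hkl]

lemma pathVal_le_sum_abs_box (Y : ℤ × ℕ × Bool → ℝ) {x : ℤ} {s : ℕ → Bool} {l : ℕ}
    (hs : ∀ k ≤ l, 0 ≤ pos x s k ∧ pos x s k ≤ l) :
    pathVal Y x 0 s l ≤ ∑ e ∈ box l, |Y e| := by
  rw [pathVal_eq_sum_pathEdges]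
  exact (sum_le_sum fun e _ => le_abs_self (Y e)).trans
    (sum_le_sum_of_subset_of_nonneg (pathEdges_subset_box hs) fun e _ _ => abs_nonneg _)

lemma exists_pathVal_zigzag_le_of_Yl_le {Y : ℤ × ℕ × Bool → ℝ} {l : ℕ} (hl : 1 ≤ l) {a : ℝ}
    (h : Yl Y l ≤ a) :
    ∃ k ∈ range l, pathVal Y (2 * k) 0 (zigzag (decide ((2 * k : ℤ) < l))) l ≤ a := by
  let Start := {x : ℤ // 0 ≤ x ∧ x ≤ l ∧ x % 2 = 0}
  let Paths (x : ℤ) := {s : ℕ → Bool // ∀ k ≤ l, 0 ≤ pos x s k ∧ pos x s k ≤ l}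
  have : Finite Start := ((Set.finite_Icc (0 : ℤ) l).subset fun x hx => ⟨hx.1, hx.2.1⟩).to_subtype
  have : Nonempty Start := ⟨⟨0, le_rfl, by positivity, rfl⟩⟩
  obtain ⟨⟨x, hx0, hxl, hx2⟩, hx⟩ := exists_eq_ciInf_of_finite (f := fun x : Start =>
    ⨆ s : Paths x.1, pathVal Y x.1 0 s.1 l)
  have hzigzag : pathVal Y x 0 (zigzag (decide (x < l))) l ≤ a := by
    refine le_trans ?_ (hx.trans_le h)
    refine le_ciSup (f := fun s : Paths x => pathVal Y x 0 s.1 l) ?_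
      ⟨zigzag (decide (x < l)), fun k _ => pos_zigzag_mem_Icc hl hx0 hxl k⟩
    exact ⟨_, Set.forall_mem_range.2 fun s => pathVal_le_sum_abs_box Y s.2⟩
  refine ⟨(x / 2).toNat, mem_range.2 (by omega), ?_⟩
  rwa [show 2 * ((x / 2).toNat : ℤ) = x by omega]

end Stmt7

namespace ProbabilityTheory

open Finset

lemma measureReal_sum_le_le_exp_mul_mgf_pow {Ω ι : Type*} [MeasurableSpace Ω] {P : Measure Ω}
    [IsProbabilityMeasure P] {X : ι → Ω → ℝ} (hmeas : ∀ i, Measurable (X i))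
    (hindep : iIndepFun X P) (hident : ∀ i j, IdentDistrib (X i) (X j) P P) (j : ι) {t : ℝ}
    (ht : t ≤ 0) (hint : ∀ i, Integrable (fun ω => Real.exp (t * X i ω)) P)
    (s : Finset ι) (ε : ℝ) :
    P.real {ω | ∑ i ∈ s, X i ω ≤ ε} ≤ Real.exp (-t * ε) * mgf (X j) P t ^ #s := by
  have hsum := measure_le_le_exp_mul_mgf (X := ∑ i ∈ s, X i) ε ht
    (hindep.integrable_exp_mul_sum hmeas fun i _ => hint i)
  simp only [Finset.sum_apply] at hsum
  rwa [hindep.mgf_sum hmeas, prod_eq_pow_card fun i _ => mgf_congr_of_identDistrib _ _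
    (hident i j) t] at hsum

end ProbabilityTheory

lemma exp_mul_pow_le_exp_of_log_le {c₀ K r : ℝ} (hK : 0 < K)
    (hr : Real.log K ≤ c₀ / 4 * r) (l : ℕ) :
    Real.exp (c₀ / 2 * -(r * l)) * K ^ l ≤ Real.exp (-(c₀ / 4 * r * l)) := by
  rw [← Real.exp_log hK, ← Real.exp_nat_mul, ← Real.exp_add, Real.exp_le_exp]
  nlinarith [mul_le_mul_of_nonneg_left hr (Nat.cast_nonneg (α := ℝ) l)]

theorem stmt_7_general
    {Ω : Type} [MeasurableSpace Ω] (P : Measure Ω) [IsProbabilityMeasure P]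
    (X : ℤ × ℕ × Bool → Ω → ℝ)
    (hmeas : ∀ e, Measurable (X e))
    (hindep : iIndepFun X P)
    (hident : ∀ e e', Measure.map (X e) P = Measure.map (X e') P)
    (c₀ : ℝ) (hc₀ : 0 < c₀)
    (hcramer : ∀ e, ∀ c : ℝ, |c| < c₀ → Integrable (fun ω => Real.exp (c * X e ω)) P) :
    ∃ (c : ℝ) (l₀ : ℕ) (r₀ : ℝ), 0 < c ∧
      ∀ l : ℕ, l₀ ≤ l → ∀ r : ℝ, r₀ < r →
        (P {ω | Yl (fun e => X e ω) l ≤ -(r * l)}).toReal ≤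
          (l : ℝ) * Real.exp (-(c * r * l)) := by
  have hint : ∀ e, Integrable (fun ω => Real.exp (-(c₀ / 2) * X e ω)) P := fun e =>
    hcramer e _ (by rw [abs_neg, abs_of_pos (half_pos hc₀)]; linarith)
  set K := mgf (X (0, 0, true)) P (-(c₀ / 2))
  have hK : 0 < K := mgf_pos (hint _)
  refine ⟨c₀ / 4, 1, 4 / c₀ * Real.log K, by positivity, fun l hl r hr => ?_⟩
  have hlogK : Real.log K ≤ c₀ / 4 * r := by
    rw [div_mul_eq_mul_div, div_lt_iff₀ hc₀] at hr; linarith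
  let zigzagPath (k : ℕ) (ω : Ω) : ℝ :=
    pathVal (fun e => X e ω) (2 * k) 0 (zigzag (decide ((2 * k : ℤ) < l))) l
  have hzigzag (k : ℕ) : P.real {ω | zigzagPath k ω ≤ -(r * l)} ≤ Real.exp (-(c₀ / 4 * r * l)) := by
    simp only [zigzagPath, pathVal_eq_sum_pathEdges]
    refine (measureReal_sum_le_le_exp_mul_mgf_pow hmeas hindep
      (fun e e' => ⟨(hmeas e).aemeasurable, (hmeas e').aemeasurable, hident e e'⟩) (0, 0, true)
      (neg_nonpos.2 (half_pos hc₀).le) hint _ _).trans ?_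
    rw [card_pathEdges, neg_neg]
    exact exp_mul_pow_le_exp_of_log_le hK hlogK l
  calc P.real {ω | Yl (fun e => X e ω) l ≤ -(r * l)}
      ≤ P.real (⋃ k ∈ Finset.range l, {ω | zigzagPath k ω ≤ -(r * l)}) :=
        measureReal_mono (fun ω hω => by
          simpa using exists_pathVal_zigzag_le_of_Yl_le hl hω) (measure_ne_top _ _)
    _ ≤ ∑ k ∈ Finset.range l, P.real {ω | zigzagPath k ω ≤ -(r * l)} :=
        measureReal_biUnion_finset_le _ _
    _ ≤ l * Real.exp (-(c₀ / 4 * r * l)) := by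
        simpa using Finset.sum_le_sum fun k (_ : k ∈ Finset.range l) => hzigzag k

/-- Lemma 2.2.  Under the Cramér condition, there exist
`c > 0`, `l₀` and `r₀ < ∞` such that for all `l ≥ l₀` and all `r > r₀`,
`P(Y_l ≤ -r l) ≤ l e^{-c r l}`. -/
theorem stmt_7
    {Ω : Type} [MeasurableSpace Ω] (P : Measure Ω) [IsProbabilityMeasure P]
    (X : ℤ × ℕ × Bool → Ω → ℝ)
    (hmeas : ∀ e, Measurable (X e))
    (hindep : iIndepFun X P)
    (hident : ∀ e e', Measure.map (X e) P = Measure.map (X e') P)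
    (hmean : ∀ e, ∫ ω, X e ω ∂P = 0)
    (c₀ : ℝ) (hc₀ : 0 < c₀)
    (hcramer : ∀ e, ∀ c : ℝ, |c| < c₀ → Integrable (fun ω => Real.exp (c * X e ω)) P) :
    ∃ (c : ℝ) (l₀ : ℕ) (r₀ : ℝ), 0 < c ∧
      ∀ l : ℕ, l₀ ≤ l → ∀ r : ℝ, r₀ < r →
        (P {ω | Yl (fun e => X e ω) l ≤ -(r * l)}).toReal ≤
          (l : ℝ) * Real.exp (-(c * r * l)) :=
  stmt_7_general P X hmeas hindep hident c₀ hc₀ hcramer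
end

section
/- Let {X_e} be i.i.d. standard Gaussian N(0,1) random variables on the edge sets T_0, T_1, … with |T_k| ≤ 2^{2k+1}, and V_k^- = Σ_{e∈T_k} X_e^-. There is a constant c > 0 such that for any ε > 0 and δ > 0 with 2⁷δ < ε, for all N sufficiently large, P(Σ_{k=0}^{N+log δ} 2^{−k}V_k^- ≥ ε·2^N) ≤ e^{−cε²2^{2N}/N}. -/
/-!
The shells `T_k` of edges of Model 1 (`d = 1`): `T_k` is a finite set of edges
with `|T_k| ≤ 2^{2k+1}`, the `T_k` pairwise disjoint, and the weights `{X_e}`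
are i.i.d. `N(0,1)`.  `V_k^- = Σ_{e ∈ T_k} X_e^-`.
-/

open MeasureTheory ProbabilityTheory Filter

namespace Stmt15

/-- `V_k^- = Σ_{e ∈ T_k} X_e^-`. -/
noncomputable def Vneg {E : Type} (T : ℕ → Finset E) (X : E → Ω → ℝ) (k : ℕ) (ω : Ω) : ℝ :=
  ∑ e ∈ T k, max (-(X e ω)) 0

end Stmt15

open Stmt15

/-!
The weighted sum is `∑ₑ aₑ Xₑ⁻` over the edges of `T_0, …, T_K` (`K = N + log δ`), with
`aₑ = 2^{-k}` on `T_k`: a sum of independent variables. Completing the square in the Gaussian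
density gives `E e^{s X⁻} = e^{s²/2} Φ(s) + 1 - Φ(0) ≤ e^{s²/2} (1 + s) ≤ e^{s²/2 + s}` for
`s ≥ 0`, because the density is at most `1`. The exponential Chebyshev inequality then bounds
the probability by `exp(-t ε 2^N + t²/2 ∑ aₑ² + t ∑ aₑ)`, and the shell sizes give
`∑ aₑ² ≤ 2K` and `∑ aₑ ≤ 2^{K+1} = 4 δ 2^N < ε 2^N / 32`. The choice `t = ε 2^N / (8N)`
yields the bound with `c = 1/16`.
-/

open Real Finset Function

lemma gaussianPDFReal_zero_one_le_one (x : ℝ) : gaussianPDFReal 0 1 x ≤ 1 := by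
  have hsqrt : 1 ≤ √(2 * π) := Real.one_le_sqrt.2 (by linarith [Real.pi_gt_three])
  have hexp : rexp (-x ^ 2 / 2) ≤ 1 := Real.exp_le_one_iff.2 (by nlinarith [sq_nonneg x])
  simp only [gaussianPDFReal, NNReal.coe_one, mul_one, sub_zero]
  exact mul_le_one₀ (inv_le_one_of_one_le₀ hsqrt) (Real.exp_nonneg _) hexp

lemma gaussianReal_real_Ioc_le {a b : ℝ} (hab : a ≤ b) :
    (gaussianReal 0 1).real (Set.Ioc a b) ≤ b - a := by
  rw [measureReal_def, gaussianReal_apply_eq_integral 0 one_ne_zero,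
    ENNReal.toReal_ofReal (setIntegral_nonneg measurableSet_Ioc
      fun x _ ↦ gaussianPDFReal_nonneg 0 1 x)]
  calc ∫ x in Set.Ioc a b, gaussianPDFReal 0 1 x ≤ ∫ _ in Set.Ioc a b, (1 : ℝ) :=
        setIntegral_mono_on (integrable_gaussianPDFReal 0 1).integrableOn
          (integrableOn_const (by simp)) measurableSet_Ioc
          fun x _ ↦ gaussianPDFReal_zero_one_le_one x
    _ = b - a := by simp [hab]

lemma gaussianPDFReal_zero_one_mul_exp (s x : ℝ) :
    gaussianPDFReal 0 1 x * rexp (-(s * x)) =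
      rexp (s ^ 2 / 2) * gaussianPDFReal 0 1 (x + s) := by
  simp only [gaussianPDFReal, NNReal.coe_one, mul_one, sub_zero]
  rw [mul_assoc, ← Real.exp_add, mul_left_comm, ← Real.exp_add]
  ring_nf

lemma setIntegral_Iic_zero_exp_neg_mul_gaussianReal (s : ℝ) :
    ∫ x in Set.Iic 0, rexp (-(s * x)) ∂gaussianReal 0 1 =
      rexp (s ^ 2 / 2) * (gaussianReal 0 1).real (Set.Iic s) := by
  have htilt : ∀ x,
      gaussianPDFReal 0 1 x • (Set.Iic 0).indicator (fun x ↦ rexp (-(s * x))) x =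
        rexp (s ^ 2 / 2) * (Set.Iic s).indicator (gaussianPDFReal 0 1) (x + s) := by
    intro x
    by_cases hx : x ≤ 0
    · simp [Set.indicator_of_mem, hx, gaussianPDFReal_zero_one_mul_exp]
    · simp [Set.indicator_of_notMem, hx]
  rw [← integral_indicator measurableSet_Iic, integral_gaussianReal_eq_integral_smul one_ne_zero,
    funext htilt, integral_const_mul, integral_add_right_eq_self,
    integral_indicator measurableSet_Iic, measureReal_def,
    gaussianReal_apply_eq_integral 0 one_ne_zero,
    ENNReal.toReal_ofReal (setIntegral_nonneg measurableSet_Iic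
      fun x _ ↦ gaussianPDFReal_nonneg 0 1 x)]

lemma exp_mul_negPart_eq_max {s : ℝ} (hs : 0 ≤ s) (x : ℝ) :
    rexp (s * max (-x) 0) = max (rexp (-(s * x))) 1 := by
  rw [mul_max_of_nonneg _ _ hs, Real.exp_monotone.map_max, mul_zero, Real.exp_zero, mul_neg]

lemma integrable_exp_mul_negPart_gaussianReal {s : ℝ} (hs : 0 ≤ s) :
    Integrable (fun x ↦ rexp (s * max (-x) 0)) (gaussianReal 0 1) := by
  simp_rw [exp_mul_negPart_eq_max hs]
  exact ((integrable_exp_mul_gaussianReal (-s)).congr (ae_of_all _ fun x ↦ by simp)).sup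
    (integrable_const 1)

lemma integral_exp_mul_negPart_gaussianReal_le {s : ℝ} (hs : 0 ≤ s) :
    ∫ x, rexp (s * max (-x) 0) ∂gaussianReal 0 1 ≤ rexp (s ^ 2 / 2 + s) := by
  set γ := gaussianReal 0 1
  have hneg :
      ∫ x in Set.Iic 0, rexp (s * max (-x) 0) ∂γ = rexp (s ^ 2 / 2) * γ.real (Set.Iic s) := by
    rw [← setIntegral_Iic_zero_exp_neg_mul_gaussianReal]
    refine setIntegral_congr_fun measurableSet_Iic fun x (hx : x ≤ 0) ↦ ?_
    rw [max_eq_left (neg_nonneg.2 hx), mul_neg]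
  have hpos : ∫ x in (Set.Iic 0)ᶜ, rexp (s * max (-x) 0) ∂γ = γ.real (Set.Iic 0)ᶜ := by
    rw [← mul_one (γ.real _), ← smul_eq_mul, ← setIntegral_const]
    refine setIntegral_congr_fun measurableSet_Iic.compl fun x (hx : ¬ x ≤ 0) ↦ ?_
    rw [max_eq_right (by linarith [not_le.1 hx]), mul_zero, Real.exp_zero]
  have hsplit : γ.real (Set.Iic s) ≤ γ.real (Set.Iic 0) + s := by
    rw [← Set.Iic_union_Ioc_eq_Iic hs, measureReal_union (Set.Iic_disjoint_Ioc le_rfl)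
      measurableSet_Ioc]
    simpa using gaussianReal_real_Ioc_le hs
  have htotal : γ.real (Set.Iic 0) + γ.real (Set.Iic 0)ᶜ = 1 := by
    rw [measureReal_add_measureReal_compl measurableSet_Iic, probReal_univ]
  have hexp1 : 1 ≤ rexp (s ^ 2 / 2) := Real.one_le_exp (by positivity)
  calc ∫ x, rexp (s * max (-x) 0) ∂γ
      = rexp (s ^ 2 / 2) * γ.real (Set.Iic s) + γ.real (Set.Iic 0)ᶜ := by
        rw [← integral_add_compl measurableSet_Iic (integrable_exp_mul_negPart_gaussianReal hs),
          hneg, hpos]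
    _ ≤ rexp (s ^ 2 / 2) * (1 + s) := by
        nlinarith [mul_le_mul_of_nonneg_left hsplit (Real.exp_nonneg (s ^ 2 / 2)),
          mul_le_mul_of_nonneg_right hexp1 (measureReal_nonneg (μ := γ) (s := (Set.Iic 0)ᶜ))]
    _ ≤ rexp (s ^ 2 / 2 + s) := by
        rw [Real.exp_add, add_comm 1 s]
        exact mul_le_mul_of_nonneg_left (Real.add_one_le_exp s) (Real.exp_nonneg _)

section NegPart

variable {Ω : Type*} [MeasurableSpace Ω] {P : Measure Ω} {Z : Ω → ℝ}

lemma integrable_exp_mul_negPart_of_map_eq_gaussianReal (hZ : Measurable Z)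
    (hlaw : P.map Z = gaussianReal 0 1) {s : ℝ} (hs : 0 ≤ s) :
    Integrable (fun ω ↦ rexp (s * max (-Z ω) 0)) P := by
  have h := integrable_exp_mul_negPart_gaussianReal hs
  rw [← hlaw, integrable_map_measure (by fun_prop) hZ.aemeasurable] at h
  exact h

lemma mgf_const_mul_negPart_le_of_map_eq_gaussianReal (hZ : Measurable Z)
    (hlaw : P.map Z = gaussianReal 0 1) {a t : ℝ} (ha : 0 ≤ a) (ht : 0 ≤ t) :
    mgf (fun ω ↦ a * max (-Z ω) 0) P t ≤ rexp ((t * a) ^ 2 / 2 + t * a) := by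
  rw [mgf_const_mul, mul_comm a t, mgf,
    ← integral_map (f := fun x ↦ rexp (t * a * max (-x) 0)) hZ.aemeasurable (by fun_prop), hlaw]
  exact integral_exp_mul_negPart_gaussianReal_le (mul_nonneg ht ha)

end NegPart

lemma ProbabilityTheory.iIndepFun.measureReal_sum_ge_le {Ω ι : Type*} [MeasurableSpace Ω]
    {P : Measure Ω} {Y : ι → Ω → ℝ} (hindep : iIndepFun Y P) (hmeas : ∀ i, Measurable (Y i))
    {s : Finset ι} {t : ℝ} (ht : 0 ≤ t) {g : ι → ℝ}
    (hint : ∀ i ∈ s, Integrable (fun ω ↦ rexp (t * Y i ω)) P)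
    (hmgf : ∀ i ∈ s, mgf (Y i) P t ≤ rexp (g i)) (a : ℝ) :
    P.real {ω | a ≤ ∑ i ∈ s, Y i ω} ≤ rexp (-t * a + ∑ i ∈ s, g i) := by
  have := hindep.isProbabilityMeasure
  calc P.real {ω | a ≤ ∑ i ∈ s, Y i ω}
      ≤ rexp (-t * a) * mgf (∑ i ∈ s, Y i) P t := by
        simpa only [Finset.sum_apply] using
          measure_ge_le_exp_mul_mgf a ht (hindep.integrable_exp_mul_sum hmeas hint)
    _ ≤ rexp (-t * a) * ∏ i ∈ s, rexp (g i) := by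
        rw [hindep.mgf_sum hmeas]
        gcongr with i hi
        exacts [fun i _ ↦ mgf_nonneg, hmgf i hi]
    _ = rexp (-t * a + ∑ i ∈ s, g i) := by rw [Real.exp_add, Real.exp_sum]

section Shells

variable {E : Type*} (T : ℕ → Finset E)

open Classical in
noncomputable def shellWeight (K : ℕ) (e : E) : ℝ :=
  ∑ k ∈ range K, if e ∈ T k then (2 : ℝ) ^ (-(k : ℤ)) else 0

variable {T}

lemma shellWeight_nonneg (K : ℕ) (e : E) : 0 ≤ shellWeight T K e :=
  sum_nonneg fun _ _ ↦ by positivity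

lemma shellWeight_eq (hdisj : Pairwise (Disjoint on T)) {K k : ℕ} (hk : k < K) {e : E}
    (he : e ∈ T k) : shellWeight T K e = (2 : ℝ) ^ (-(k : ℤ)) := by
  rw [shellWeight, sum_eq_single_of_mem k (mem_range.2 hk) fun j _ hjk ↦
    if_neg fun hej ↦ disjoint_left.1 (hdisj hjk) hej he, if_pos he]

variable [DecidableEq E]

lemma sum_shells_eq_sum_biUnion (hdisj : Pairwise (Disjoint on T)) (K : ℕ) (f : ℝ → E → ℝ) :
    ∑ k ∈ range K, ∑ e ∈ T k, f ((2 : ℝ) ^ (-(k : ℤ))) e =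
      ∑ e ∈ (range K).biUnion T, f (shellWeight T K e) e := by
  rw [sum_biUnion fun k _ k' _ hkk' ↦ hdisj hkk']
  refine sum_congr rfl fun k hk ↦ sum_congr rfl fun e he ↦ ?_
  rw [shellWeight_eq hdisj (mem_range.1 hk) he]

lemma sum_shellWeight_sq_le (hcard : ∀ k, #(T k) ≤ 2 ^ (2 * k + 1))
    (hdisj : Pairwise (Disjoint on T)) (K : ℕ) :
    ∑ e ∈ (range K).biUnion T, shellWeight T K e ^ 2 ≤ 2 * K := by
  rw [← sum_shells_eq_sum_biUnion hdisj K fun w _ ↦ w ^ 2]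
  calc ∑ k ∈ range K, ∑ e ∈ T k, ((2 : ℝ) ^ (-(k : ℤ))) ^ 2
      ≤ ∑ k ∈ range K, (2 : ℝ) := by
        refine sum_le_sum fun k _ ↦ ?_
        rw [sum_const, nsmul_eq_mul, zpow_neg, zpow_natCast]
        calc (#(T k) : ℝ) * ((2 ^ k)⁻¹) ^ 2 ≤ 2 ^ (2 * k + 1) * ((2 ^ k)⁻¹) ^ 2 := by
              gcongr; exact_mod_cast hcard k
          _ = 2 := by field_simp; ring
    _ = 2 * K := by simp [mul_comm]

lemma sum_shellWeight_le (hcard : ∀ k, #(T k) ≤ 2 ^ (2 * k + 1))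
    (hdisj : Pairwise (Disjoint on T)) (K : ℕ) :
    ∑ e ∈ (range K).biUnion T, shellWeight T K e ≤ 2 ^ (K + 1) := by
  rw [← sum_shells_eq_sum_biUnion hdisj K fun w _ ↦ w]
  calc ∑ k ∈ range K, ∑ e ∈ T k, (2 : ℝ) ^ (-(k : ℤ))
      ≤ ∑ k ∈ range K, 2 * (2 : ℝ) ^ k := by
        refine sum_le_sum fun k _ ↦ ?_
        rw [sum_const, nsmul_eq_mul, zpow_neg, zpow_natCast]
        calc (#(T k) : ℝ) * (2 ^ k)⁻¹ ≤ 2 ^ (2 * k + 1) * (2 ^ k)⁻¹ := by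
              gcongr; exact_mod_cast hcard k
          _ = 2 * 2 ^ k := by field_simp; ring
    _ ≤ 2 ^ (K + 1) := by
        rw [← mul_sum, geom_sum_eq (by norm_num : (2 : ℝ) ≠ 1), pow_succ]
        linarith [pow_pos (two_pos : (0 : ℝ) < 2) K]

end Shells

section ShellSum

variable {Ω E : Type} [MeasurableSpace Ω] {P : Measure Ω} {T : ℕ → Finset E} {X : E → Ω → ℝ}

lemma measureReal_sum_shells_Vneg_ge_le (hcard : ∀ k, #(T k) ≤ 2 ^ (2 * k + 1))
    (hdisj : Pairwise (Disjoint on T)) (hmeas : ∀ e, Measurable (X e)) (hindep : iIndepFun X P)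
    (hdist : ∀ e, P.map (X e) = gaussianReal 0 1) (K : ℕ) {t : ℝ} (ht : 0 ≤ t) (a : ℝ) :
    P.real {ω | a ≤ ∑ k ∈ range K, (2 : ℝ) ^ (-(k : ℤ)) * Vneg T X k ω} ≤
      rexp (-t * a + t ^ 2 * K + t * 2 ^ (K + 1)) := by
  classical
  set U := (range K).biUnion T
  set w := shellWeight T K
  set Y : E → Ω → ℝ := fun e ω ↦ w e * max (-X e ω) 0
  have hsum : ∀ ω, ∑ k ∈ range K, (2 : ℝ) ^ (-(k : ℤ)) * Vneg T X k ω = ∑ e ∈ U, Y e ω := by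
    intro ω
    simp only [Vneg, mul_sum]
    exact sum_shells_eq_sum_biUnion hdisj K fun c e ↦ c * max (-X e ω) 0
  have hindepY : iIndepFun Y P := hindep.comp (fun e x ↦ w e * max (-x) 0) fun e ↦ by fun_prop
  have hint : ∀ e ∈ U, Integrable (fun ω ↦ rexp (t * Y e ω)) P := fun e _ ↦ by
    simpa only [Y, mul_assoc] using integrable_exp_mul_negPart_of_map_eq_gaussianReal (hmeas e)
      (hdist e) (mul_nonneg ht (shellWeight_nonneg K e))
  have hmgf : ∀ e ∈ U, mgf (Y e) P t ≤ rexp ((t * w e) ^ 2 / 2 + t * w e) := fun e _ ↦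
    mgf_const_mul_negPart_le_of_map_eq_gaussianReal (hmeas e) (hdist e)
      (shellWeight_nonneg K e) ht
  have hexponent : ∑ e ∈ U, ((t * w e) ^ 2 / 2 + t * w e) ≤ t ^ 2 * K + t * 2 ^ (K + 1) := by
    have hsq := mul_le_mul_of_nonneg_left (sum_shellWeight_sq_le hcard hdisj K)
      (by positivity : 0 ≤ t ^ 2 / 2)
    have hlin := mul_le_mul_of_nonneg_left (sum_shellWeight_le hcard hdisj K) ht
    rw [mul_sum] at hsq hlin
    rw [sum_add_distrib]
    have hsq_eq : ∀ e, (t * w e) ^ 2 / 2 = t ^ 2 / 2 * w e ^ 2 := fun e ↦ by ring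
    simp only [hsq_eq]
    linarith
  calc P.real {ω | a ≤ ∑ k ∈ range K, (2 : ℝ) ^ (-(k : ℤ)) * Vneg T X k ω}
      = P.real {ω | a ≤ ∑ e ∈ U, Y e ω} := by simp_rw [hsum]
    _ ≤ rexp (-t * a + ∑ e ∈ U, ((t * w e) ^ 2 / 2 + t * w e)) :=
        hindepY.measureReal_sum_ge_le (fun e ↦ by fun_prop) ht hint hmgf a
    _ ≤ rexp (-t * a + t ^ 2 * K + t * 2 ^ (K + 1)) := by
        rw [add_assoc]; gcongr

end ShellSum

lemma chernoff_exponent_le {Q n K L : ℝ} (hQ : 0 ≤ Q) (hn : 0 < n) (hK : K ≤ 2 * n)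
    (hL : L ≤ Q / 32) :
    -(Q / (8 * n)) * Q + (Q / (8 * n)) ^ 2 * K + Q / (8 * n) * L ≤ -(Q ^ 2 / 16) / n := by
  have ht : 0 ≤ Q / (8 * n) := by positivity
  calc -(Q / (8 * n)) * Q + (Q / (8 * n)) ^ 2 * K + Q / (8 * n) * L
      ≤ -(Q / (8 * n)) * Q + (Q / (8 * n)) ^ 2 * (2 * n) + Q / (8 * n) * (Q / 32) := by gcongr
    _ = -(23 / 256 * Q ^ 2) / n := by field_simp; ring
    _ ≤ -(Q ^ 2 / 16) / n := by
        rw [neg_div, neg_div, neg_le_neg_iff]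
        gcongr; linarith [sq_nonneg Q]

theorem stmt_15_general
    {Ω : Type} [MeasurableSpace Ω] (P : Measure Ω)
    {E : Type} (T : ℕ → Finset E)
    (hcard : ∀ k, (T k).card ≤ 2 ^ (2 * k + 1))
    (hdisj : ∀ k k', k ≠ k' → Disjoint (T k) (T k'))
    (X : E → Ω → ℝ)
    (hmeas : ∀ e, Measurable (X e))
    (hindep : iIndepFun X P)
    (hdist : ∀ e, Measure.map (X e) P = gaussianReal 0 1) :
    ∃ c > (0 : ℝ), ∀ (ε δ : ℝ) (m : ℕ), 0 < ε → δ = (2 : ℝ) ^ (-(m : ℤ)) →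
      2 ^ 7 * δ < ε →
      ∃ N₀ : ℕ, ∀ N : ℕ, N₀ ≤ N →
        (P {ω | ε * 2 ^ N ≤
            ∑ k ∈ Finset.range (N - m + 1), (2 : ℝ) ^ (-(k : ℤ)) * Vneg T X k ω}).toReal ≤
          Real.exp (-(c * ε ^ 2 * 2 ^ (2 * N)) / N) := by
  -- `N₀ = m + 1` makes `N ≥ 1` and the truncated subtraction `N - m` exact.
  refine ⟨1 / 16, by norm_num, fun ε δ m hε hδ hδε ↦ ⟨m + 1, fun N hN ↦ ?_⟩⟩
  set Q := ε * 2 ^ N with hQ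
  have hNpos : (0 : ℝ) < N := by exact_mod_cast (by omega : 0 < N)
  have hK : ((N - m + 1 : ℕ) : ℝ) ≤ 2 * N := by exact_mod_cast (by omega : N - m + 1 ≤ 2 * N)
  have hL : (2 : ℝ) ^ (N - m + 1 + 1) ≤ Q / 32 := by
    have hpow : (2 : ℝ) ^ (N - m + 1 + 1) = 4 * 2 ^ N * δ := by
      rw [hδ, zpow_neg, zpow_natCast, eq_mul_inv_iff_mul_eq₀ (by positivity), ← pow_add,
        show N - m + 1 + 1 + m = N + 2 by omega, pow_add]
      ring
    rw [hpow]
    nlinarith [pow_pos (two_pos : (0 : ℝ) < 2) N]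
  calc (P {ω | Q ≤ ∑ k ∈ range (N - m + 1), (2 : ℝ) ^ (-(k : ℤ)) * Vneg T X k ω}).toReal
      ≤ rexp (-(Q / (8 * N)) * Q + (Q / (8 * N)) ^ 2 * ((N - m + 1 : ℕ) : ℝ) +
          Q / (8 * N) * 2 ^ (N - m + 1 + 1)) :=
        measureReal_sum_shells_Vneg_ge_le hcard (fun _ _ h ↦ hdisj _ _ h) hmeas hindep hdist _
          (by positivity) Q
    _ ≤ rexp (-(Q ^ 2 / 16) / N) := exp_le_exp.2 (chernoff_exponent_le (by positivity) hNpos hK hL)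
    _ = rexp (-(1 / 16 * ε ^ 2 * 2 ^ (2 * N)) / N) := by
        rw [hQ, mul_comm 2 N, pow_mul]; congr 1; ring

/-- Lemma 3.4.  With `{X_e}` i.i.d. `N(0,1)` on the pairwise
disjoint shells `T_k`, `|T_k| ≤ 2^{2k+1}`: there is `c > 0` such that for all
`ε > 0` and `δ = 2^{-m} > 0` (with `log₂ δ` an integer) satisfying `2⁷ δ < ε`,
for all `N` sufficiently large,
`P(Σ_{k=0}^{N + log₂ δ} 2^{-k} V_k^- ≥ ε 2^N) ≤ e^{-c ε² 2^{2N}/N}`. -/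
theorem stmt_15
    {Ω : Type} [MeasurableSpace Ω] (P : Measure Ω) [IsProbabilityMeasure P]
    {E : Type} (T : ℕ → Finset E)
    (hcard : ∀ k, (T k).card ≤ 2 ^ (2 * k + 1))
    (hdisj : ∀ k k', k ≠ k' → Disjoint (T k) (T k'))
    (X : E → Ω → ℝ)
    (hmeas : ∀ e, Measurable (X e))
    (hindep : iIndepFun X P)
    (hdist : ∀ e, Measure.map (X e) P = gaussianReal 0 1) :
    ∃ c > (0 : ℝ), ∀ (ε δ : ℝ) (m : ℕ), 0 < ε → δ = (2 : ℝ) ^ (-(m : ℤ)) →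
      2 ^ 7 * δ < ε →
      ∃ N₀ : ℕ, ∀ N : ℕ, N₀ ≤ N →
        (P {ω | ε * 2 ^ N ≤
            ∑ k ∈ Finset.range (N - m + 1), (2 : ℝ) ^ (-(k : ℤ)) * Vneg T X k ω}).toReal ≤
          Real.exp (-(c * ε ^ 2 * 2 ^ (2 * N)) / N) :=
  stmt_15_general P T hcard hdisj X hmeas hindep hdist
end
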